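/- Let C > 0, v ≥ 0 and ψ > 0, and define f : ℝ → ℝ by f(θ) = (1+v)·C·Φ((log((1+v)·C) − θ)/ψ) − exp(θ + ψ²/2)·Φ((log((1+v)·C) − θ)/ψ − ψ). Then f is strictly decreasing on ℝ, lim_{θ→−∞} f(θ) = (1+v)·C, and lim_{θ→∞} f(θ) = 0. -/

import Mathlib

open Real Filter

/-- The standard normal density `φ(u) = (2π)^{-1/2} exp(-u²/2)`. -/
noncomputable def stdNormalPDF (u : ℝ) : ℝ := (Real.sqrt (2 * Real.pi))⁻¹ * Real.exp (-u ^ 2 / 2)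

/-- The standard normal cumulative distribution function `Φ`. -/
noncomputable def stdNormalCDF (x : ℝ) : ℝ := ∫ u in Set.Iic x, stdNormalPDF u

/-!
With `K = (1 + v) C` and `a = (log K - θ) / ψ` we have `K = exp (θ + ψ a)`, hence
`K φ(a) = exp (θ + ψ²/2) φ(a - ψ)`: the density terms cancel in the derivative, and
`f' θ = -exp (θ + ψ²/2) Φ(a - ψ) < 0`.
As `θ → -∞` both arguments of `Φ` tend to `+∞` while `exp θ → 0`. As `θ → +∞`, `Φ(a) → 0`, and the
Chernoff bound `Φ x ≤ exp (2ψ x + 2ψ²)` makes the second term `O(exp (-θ))`.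
-/

open MeasureTheory ProbabilityTheory Set Topology

lemma stdNormalPDF_eq_gaussianPDFReal : stdNormalPDF = gaussianPDFReal 0 1 := by
  funext u
  simp [stdNormalPDF, gaussianPDFReal]

lemma stdNormalPDF_pos (u : ℝ) : 0 < stdNormalPDF u := by
  unfold stdNormalPDF; positivity

lemma stdNormalPDF_sub (a ψ : ℝ) :
    stdNormalPDF (a - ψ) = exp (ψ * a - ψ ^ 2 / 2) * stdNormalPDF a := by
  unfold stdNormalPDF
  rw [mul_left_comm, ← exp_add]
  ring_nf

lemma stdNormalCDF_eq_cdf : stdNormalCDF = cdf (gaussianReal 0 1) := by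
  funext x
  rw [cdf_eq_real, measureReal_def, gaussianReal_apply_eq_integral _ one_ne_zero,
    ENNReal.toReal_ofReal
      (setIntegral_nonneg measurableSet_Iic fun u _ => gaussianPDFReal_nonneg _ _ u),
    ← stdNormalPDF_eq_gaussianPDFReal]
  rfl

lemma hasDerivAt_stdNormalCDF (x : ℝ) : HasDerivAt stdNormalCDF (stdNormalPDF x) x := by
  have hint : Integrable stdNormalPDF :=
    stdNormalPDF_eq_gaussianPDFReal ▸ integrable_gaussianPDFReal 0 1
  have hcont : Continuous stdNormalPDF := by unfold stdNormalPDF; fun_prop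
  have hsplit : stdNormalCDF = fun y => stdNormalCDF 0 + ∫ u in (0 : ℝ)..y, stdNormalPDF u := by
    funext y
    rw [← intervalIntegral.integral_Iic_sub_Iic hint.integrableOn hint.integrableOn]
    unfold stdNormalCDF
    ring
  rw [hsplit]
  exact (intervalIntegral.integral_hasDerivAt_right (hcont.intervalIntegrable _ _)
    hcont.stronglyMeasurable.stronglyMeasurableAtFilter hcont.continuousAt).const_add _

lemma strictMono_stdNormalCDF : StrictMono stdNormalCDF :=
  strictMono_of_hasDerivAt_pos hasDerivAt_stdNormalCDF stdNormalPDF_pos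

lemma stdNormalCDF_pos (x : ℝ) : 0 < stdNormalCDF x := by
  have h := strictMono_stdNormalCDF (sub_one_lt x)
  rw [stdNormalCDF_eq_cdf] at h ⊢
  exact (cdf_nonneg _ _).trans_lt h

lemma stdNormalCDF_le_exp {t : ℝ} (ht : 0 ≤ t) (x : ℝ) :
    stdNormalCDF x ≤ exp (t * x + t ^ 2 / 2) := by
  have h := measure_le_le_exp_mul_mgf (X := id) (μ := gaussianReal 0 1) x (neg_nonpos.mpr ht)
    (integrable_exp_mul_gaussianReal (-t))
  rw [mgf_id_gaussianReal, ← exp_add] at h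
  rw [stdNormalCDF_eq_cdf, cdf_eq_real]
  convert h using 2 <;> first | rfl | simp

noncomputable def shortfall (K ψ θ : ℝ) : ℝ :=
  K * stdNormalCDF ((log K - θ) / ψ) - exp (θ + ψ ^ 2 / 2) * stdNormalCDF ((log K - θ) / ψ - ψ)

section Shortfall

variable {K ψ : ℝ}

lemma hasDerivAt_shortfall (hK : 0 < K) (hψ : ψ ≠ 0) (θ : ℝ) :
    HasDerivAt (shortfall K ψ)
      (-(exp (θ + ψ ^ 2 / 2) * stdNormalCDF ((log K - θ) / ψ - ψ))) θ := by
  set a := (log K - θ) / ψ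
  have ha : HasDerivAt (fun θ => (log K - θ) / ψ) (-1 / ψ) θ :=
    ((hasDerivAt_id θ).const_sub _).div_const ψ
  have hexp : HasDerivAt (fun θ => exp (θ + ψ ^ 2 / 2)) (exp (θ + ψ ^ 2 / 2)) θ := by
    simpa using ((hasDerivAt_id θ).add_const (ψ ^ 2 / 2)).exp
  have h := (((hasDerivAt_stdNormalCDF a).comp θ ha).const_mul K).sub
    (hexp.mul ((hasDerivAt_stdNormalCDF (a - ψ)).comp θ (ha.sub_const ψ)))
  have hcancel : K * stdNormalPDF a = exp (θ + ψ ^ 2 / 2) * stdNormalPDF (a - ψ) := by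
    have hKa : K = exp (θ + ψ * a) := by
      rw [mul_div_cancel₀ _ hψ, add_sub_cancel, exp_log hK]
    rw [stdNormalPDF_sub, ← mul_assoc, ← exp_add, hKa]
    ring_nf
  refine h.congr_deriv ?_
  simp only [Function.comp_apply]
  linear_combination (-1 / ψ) * hcancel

lemma strictAnti_shortfall (hK : 0 < K) (hψ : ψ ≠ 0) : StrictAnti (shortfall K ψ) :=
  strictAnti_of_hasDerivAt_neg (hasDerivAt_shortfall hK hψ) fun _ =>
    neg_neg_of_pos (mul_pos (exp_pos _) (stdNormalCDF_pos _))

lemma tendsto_shortfall_atBot (hψ : 0 < ψ) : Tendsto (shortfall K ψ) atBot (𝓝 K) := by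
  have ha : Tendsto (fun θ => (log K - θ) / ψ) atBot atTop :=
    (tendsto_atTop_add_const_left _ _ tendsto_neg_atBot_atTop).atTop_div_const hψ
  have hΦ := stdNormalCDF_eq_cdf ▸ tendsto_cdf_atTop (μ := gaussianReal 0 1)
  have hexp : Tendsto (fun θ => exp (θ + ψ ^ 2 / 2)) atBot (𝓝 0) :=
    tendsto_exp_atBot.comp (tendsto_atBot_add_const_right _ _ tendsto_id)
  have ha' : Tendsto (fun θ => (log K - θ) / ψ - ψ) atBot atTop := by
    simpa only [sub_eq_add_neg] using tendsto_atTop_add_const_right _ (-ψ) ha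
  have h := ((hΦ.comp ha).const_mul K).sub (hexp.mul (hΦ.comp ha'))
  rwa [mul_one, zero_mul, sub_zero] at h

lemma tendsto_shortfall_atTop (hψ : 0 < ψ) : Tendsto (shortfall K ψ) atTop (𝓝 0) := by
  have ha : Tendsto (fun θ => (log K - θ) / ψ) atTop atBot :=
    (tendsto_atBot_add_const_left _ _ tendsto_neg_atTop_atBot).atBot_div_const hψ
  have hΦ := stdNormalCDF_eq_cdf ▸ tendsto_cdf_atBot (μ := gaussianReal 0 1)
  have hbound (θ : ℝ) : exp (θ + ψ ^ 2 / 2) * stdNormalCDF ((log K - θ) / ψ - ψ)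
      ≤ exp (ψ ^ 2 / 2 + 2 * log K - θ) := by
    calc _ ≤ exp (θ + ψ ^ 2 / 2) * exp (2 * ψ * ((log K - θ) / ψ - ψ) + (2 * ψ) ^ 2 / 2) :=
          mul_le_mul_of_nonneg_left (stdNormalCDF_le_exp (by positivity) _) (exp_pos _).le
      _ = _ := by
          rw [← exp_add]
          congr 1
          field_simp
          ring
  have hdecay : Tendsto (fun θ => exp (ψ ^ 2 / 2 + 2 * log K - θ)) atTop (𝓝 0) :=
    tendsto_exp_atBot.comp (tendsto_atBot_add_const_left _ _ tendsto_neg_atTop_atBot)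
  have hsecond := tendsto_of_tendsto_of_tendsto_of_le_of_le tendsto_const_nhds hdecay
    (fun θ => mul_nonneg (exp_pos _).le (stdNormalCDF_pos _).le) hbound
  have h := ((hΦ.comp ha).const_mul K).sub hsecond
  rwa [mul_zero, sub_zero] at h

end Shortfall

/-- For `C > 0`, `v ≥ 0` and `ψ > 0`, the function
`f(θ) = (1+v)·C·Φ((log((1+v)·C) - θ)/ψ) - exp(θ + ψ²/2)·Φ((log((1+v)·C) - θ)/ψ - ψ)` is
strictly decreasing on `ℝ`, with `lim_{θ→-∞} f(θ) = (1+v)·C` and `lim_{θ→∞} f(θ) = 0`. -/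
theorem shortfall_strictAnti_and_limits (C v ψ : ℝ) (hC : 0 < C) (hv : 0 ≤ v) (hψ : 0 < ψ) :
    StrictAnti (fun θ : ℝ =>
      (1 + v) * C * stdNormalCDF ((Real.log ((1 + v) * C) - θ) / ψ)
        - Real.exp (θ + ψ ^ 2 / 2) * stdNormalCDF ((Real.log ((1 + v) * C) - θ) / ψ - ψ)) ∧
    Tendsto (fun θ : ℝ =>
      (1 + v) * C * stdNormalCDF ((Real.log ((1 + v) * C) - θ) / ψ)
        - Real.exp (θ + ψ ^ 2 / 2) * stdNormalCDF ((Real.log ((1 + v) * C) - θ) / ψ - ψ))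
      atBot (nhds ((1 + v) * C)) ∧
    Tendsto (fun θ : ℝ =>
      (1 + v) * C * stdNormalCDF ((Real.log ((1 + v) * C) - θ) / ψ)
        - Real.exp (θ + ψ ^ 2 / 2) * stdNormalCDF ((Real.log ((1 + v) * C) - θ) / ψ - ψ))
      atTop (nhds 0) :=
  ⟨strictAnti_shortfall (by positivity) hψ.ne', tendsto_shortfall_atBot hψ,
    tendsto_shortfall_atTop hψ⟩
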